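/- A language L ⊆ Σ* is recursive (decidable) if and only if there exists a constant c_L such that for all n, C(λ_{1:n} | n) ≤ c_L, where λ is the characteristic sequence of L with respect to a fixed computable enumeration v₁, v₂, … of Σ*. -/

import Mathlib

/-- Plain conditional Kolmogorov complexity `C(x|y)` relative to the machine `φ`:
the length of a shortest program `p` with `φ p y = x`. -/
noncomputable def kolC (φ : List Bool → List Bool → Part (List Bool)) (x y : List Bool) : ℕ :=
  sInf {n | ∃ p : List Bool, p.length = n ∧ x ∈ φ p y}

/-- Unconditional Kolmogorov complexity `C(x) = C(x|ε)`. -/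
noncomputable def kolCp (φ : List Bool → List Bool → Part (List Bool)) (x : List Bool) : ℕ :=
  kolC φ x []

/-- `φ` is a universal partial computable function: it is partial computable and
simulates every partial computable `ψ` with at most constant overhead in program length. -/
def IsUniversal (φ : List Bool → List Bool → Part (List Bool)) : Prop :=
  Partrec₂ φ ∧ ∀ ψ : List Bool → List Bool → Part (List Bool), Partrec₂ ψ →
    ∃ c : ℕ, ∀ p y x, x ∈ ψ p y → ∃ q : List Bool, x ∈ φ q y ∧ q.length ≤ p.length + c

/-- The `k`-th binary string in length-lexicographic order, giving the fixed computable
enumeration `vᵢ = natToStr (i-1)` of `{0,1}*`. -/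
def natToStr (n : ℕ) : List Bool := (Nat.bits (n + 1)).reverse.tail

open Classical in
/-- The length-`n` prefix `λ_{1:n}` of the characteristic sequence of `L`. -/
noncomputable def lamPrefix (L : Language Bool) (n : ℕ) : List Bool :=
  (List.range n).map fun i => if natToStr i ∈ L then true else false

/-!
If `L` is decidable, one machine computes `λ_{1:n}` from `n`, so universality bounds
`C(λ_{1:n} | n)`.

Conversely, if `C(λ_{1:n} | n) ≤ c`, every prefix of `λ` is printed, on input `n`, by one of
the finitely many programs of length at most `c`. Let `m` be least such that for some `k₀` and
all large `n` at most `m` of these programs output on `n` an extension of `λ_{1:k₀}`. By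
minimality, for every `k` there are arbitrarily large `n` on which at least `m` programs output
extensions of `λ_{1:k}`. To compute `λ_i`, dovetail until some large `n` and some
`w ⊒ λ_{1:k₀}` with `|w| > i` appear such that `m` programs output extensions of `w` on `n`.
These programs are then all the programs that output extensions of `λ_{1:k₀}` on `n`, among
them the one printing `λ_{1:n}`; so `w` is a prefix of `λ` and `w_i = λ_i`.
-/

theorem natToStr_succ (n : ℕ) : natToStr (n + 1) = natToStr (n / 2) ++ [decide (n % 2 = 1)] := by
  have hne (k : ℕ) : (Nat.bits (k + 1)).reverse ≠ [] := by
    have h := (Nat.digits_ne_nil_iff_ne_zero (b := 2)).2 k.succ_ne_zero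
    rw [Nat.digits_two_eq_bits] at h
    exact fun h' => h (by rw [List.reverse_eq_nil_iff.1 h', List.map_nil])
  obtain ⟨k, rfl | rfl⟩ := Nat.even_or_odd' n
  · rw [show 2 * k / 2 = k by omega]
    simp [natToStr, show 2 * k + 1 + 1 = 2 * (k + 1) by ring, Nat.bit0_bits _ k.succ_ne_zero,
      List.tail_append_of_ne_nil (hne k)]
  · rw [show (2 * k + 1) / 2 = k by omega]
    simp [natToStr, show 2 * k + 1 + 1 + 1 = 2 * (k + 1) + 1 by ring, Nat.bit1_bits,
      List.tail_append_of_ne_nil (hne k)]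

def strToNat (s : List Bool) : ℕ := s.foldl (fun k b => 2 * k + cond b 2 1) 0

theorem strToNat_concat (s : List Bool) (b : Bool) :
    strToNat (s ++ [b]) = 2 * strToNat s + cond b 2 1 := by
  simp [strToNat]

theorem natToStr_strToNat (s : List Bool) : natToStr (strToNat s) = s := by
  induction s using List.reverseRecOn with
  | nil => rfl
  | append_singleton s b ih =>
    cases b <;> simp [strToNat_concat, natToStr_succ, ih, Nat.add_mod, Nat.add_div]

theorem strToNat_natToStr (n : ℕ) : strToNat (natToStr n) = n := by
  induction n using Nat.strong_induction_on with
  | _ n ih =>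
    rcases n with _ | n
    · rfl
    · rw [natToStr_succ, strToNat_concat, ih (n / 2) (by omega)]
      rcases Nat.mod_two_eq_zero_or_one n with h | h <;> simp [h] <;> omega

theorem primrec_strToNat : Primrec strToNat :=
  Primrec.list_foldl Primrec.id (Primrec.const 0)
    (Primrec.nat_add.comp (Primrec.nat_mul.comp (Primrec.const 2) (Primrec.fst.comp Primrec.snd))
      (Primrec.cond (Primrec.snd.comp Primrec.snd) (Primrec.const 2) (Primrec.const 1))).to₂

theorem primrec_natToStr : Primrec natToStr := by
  have hlen : Primrec fun l : List (List Bool) => l.length - 1 :=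
    Primrec.nat_sub.comp Primrec.list_length (Primrec.const 1)
  have hstep : Primrec₂ fun (_ : Unit) (l : List (List Bool)) =>
      if l.length = 0 then some [] else
        l[(l.length - 1) / 2]?.map (· ++ [decide ((l.length - 1) % 2 = 1)]) :=
    (Primrec.ite (Primrec.eq.comp (Primrec.list_length.comp Primrec.snd) (Primrec.const 0))
      (Primrec.const (some []))
      (Primrec.option_map
        (Primrec.list_getElem?.comp Primrec.snd
          (Primrec.nat_div.comp (hlen.comp Primrec.snd) (Primrec.const 2)))
        (Primrec.list_concat.comp Primrec.snd
          (Primrec.eq.comp (Primrec.nat_mod.comp ((hlen.comp Primrec.snd).comp Primrec.fst)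
            (Primrec.const 2)) (Primrec.const 1)).decide).to₂)).to₂
  refine (Primrec.nat_strong_rec (fun (_ : Unit) n => natToStr n) hstep fun _ n => ?_).comp
    (Primrec.const ()) Primrec.id
  rcases n with _ | n
  · rfl
  · simp [natToStr_succ, List.getElem?_range (show n / 2 < n + 1 by omega)]

theorem List.map_range_prefix {α : Type*} (f : ℕ → α) {k n : ℕ} (h : k ≤ n) :
    (List.range k).map f <+: (List.range n).map f := by
  rw [← Nat.add_sub_cancel' h, List.range_add, List.map_append]
  exact List.prefix_append _ _

theorem List.getD_of_prefix_map_range {α : Type*} {f : ℕ → α} {w : List α} {n i : ℕ} (d : α)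
    (hw : w <+: (List.range n).map f) (hi : i < w.length) : w.getD i d = f i := by
  have hin : i < n := by simpa using lt_of_lt_of_le hi hw.length_le
  rw [List.getD_eq_getElem _ _ hi, hw.getElem hi]
  simp

section Computability

variable {α β σ : Type*} [Primcodable α] [Primcodable β] [Primcodable σ]

open Encodable

theorem Computable.list_map_range {f : ℕ → σ} (hf : Computable f) :
    Computable fun n => (List.range n).map f := by
  refine (Computable.nat_rec (g := fun _ => []) (h := fun _ p => p.2 ++ [f p.1]) Computable.id
    (Computable.const []) ?_).of_eq fun n => ?_
  · exact (Computable.list_concat.comp (Computable.snd.comp Computable.snd)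
      (hf.comp (Computable.fst.comp Computable.snd))).to₂
  · induction n with
    | zero => rfl
    | succ n ih => rw [List.range_succ, List.map_append, ← ih]; rfl

theorem Computable.of_primrecRel_witness {R : α → β → Prop} (hR : PrimrecRel R) {F : α → β → σ}
    (hF : Primrec₂ F) {f : α → σ} (hex : ∀ a, ∃ b, R a b) (hsound : ∀ a b, R a b → F a b = f a) :
    Computable f := by
  classical
  let search (a : α) (k : ℕ) : Option σ :=
    (decode (α := β) k).bind fun b => if R a b then some (F a b) else none
  have hsearch : Primrec₂ search :=
    Primrec.option_bind (Primrec.decode.comp Primrec.snd)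
      (Primrec.ite (hR.comp (Primrec.fst.comp Primrec.fst) Primrec.snd)
        (Primrec.option_some.comp (hF.comp (Primrec.fst.comp Primrec.fst) Primrec.snd))
        (Primrec.const none)).to₂
  refine (Partrec.rfindOpt hsearch.to_comp).of_eq_tot fun a => ?_
  have hval : ∀ x ∈ Nat.rfindOpt (search a), x = f a := fun x hx => by
    obtain ⟨k, hk⟩ := Nat.rfindOpt_spec hx
    simp only [search, Option.mem_def, Option.bind_eq_some_iff, Option.ite_none_right_eq_some,
      Option.some.injEq] at hk
    obtain ⟨b, -, hb, rfl⟩ := hk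
    exact hsound a b hb
  obtain ⟨b, hb⟩ := hex a
  have hdom : (Nat.rfindOpt (search a)).Dom :=
    Nat.rfindOpt_dom.2 ⟨encode b, F a b, by simp [search, hb]⟩
  exact hval _ (Part.get_mem hdom) ▸ Part.get_mem hdom

theorem Partrec.exists_primrec_stages {f : α →. σ} (hf : Partrec f) :
    ∃ g : α → ℕ → Option σ, Primrec₂ g ∧ (∀ a x, x ∈ f a ↔ ∃ t, g a t = some x) ∧
      ∀ a t t' x, t ≤ t' → g a t = some x → g a t' = some x := by
  obtain ⟨c, hc⟩ := Nat.Partrec.Code.exists_code.1 hf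
  have heval : ∀ a, c.eval (encode a) = (f a).map encode := fun a => by simp [hc, encodek]
  refine ⟨fun a t => (c.evaln t (encode a)).bind decode, ?_, fun a x => ?_, ?_⟩
  · exact Primrec.option_bind (Nat.Partrec.Code.primrec_evaln.comp
      ((Primrec.snd.pair (Primrec.const c)).pair (Primrec.encode.comp Primrec.fst)))
      (Primrec.decode.comp Primrec.snd).to₂
  · constructor
    · intro hx
      obtain ⟨t, ht⟩ := Nat.Partrec.Code.evaln_complete.1 (heval a ▸ Part.mem_map encode hx)
      exact ⟨t, by simp [Option.mem_def.1 ht, encodek]⟩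
    · rintro ⟨t, ht⟩
      obtain ⟨k, hk, hkx⟩ := Option.bind_eq_some_iff.1 ht
      obtain ⟨y, hy, rfl⟩ := (Part.mem_map_iff _).1 (heval a ▸ Nat.Partrec.Code.evaln_sound hk)
      rw [encodek, Option.some_inj] at hkx
      exact hkx ▸ hy
  · intro a t t' x htt' hx
    obtain ⟨k, hk, hkx⟩ := Option.bind_eq_some_iff.1 hx
    exact Option.bind_eq_some_iff.2 ⟨k, Nat.Partrec.Code.evaln_mono htt' hk, hkx⟩

theorem Primrec.list_filter {f : α → List β} {p : α → β → Bool} (hf : Primrec f)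
    (hp : Primrec₂ p) : Primrec fun a => (f a).filter (p a) :=
  (Primrec.listFilterMap hf (Primrec.cond hp (Primrec.option_some.comp Primrec.snd)
    (Primrec.const none)).to₂).of_eq fun a => by
      rw [← List.filterMap_eq_filter]; congr; funext b; cases h : p a b <;> simp [Option.guard, h]

theorem Primrec.option_any {o : α → Option β} {p : α → β → Bool} (ho : Primrec o)
    (hp : Primrec₂ p) : Primrec fun a => (o a).any (p a) :=
  (Primrec.option_casesOn ho (Primrec.const false) hp).of_eq fun a => by cases o a <;> rfl

theorem PrimrecRel.list_isPrefix : PrimrecRel fun l₁ l₂ : List α => l₁ <+: l₂ :=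
  (Primrec.eq.comp Primrec.fst
    (Primrec.list_take.comp (Primrec.list_length.comp Primrec.fst) Primrec.snd)).of_eq
    fun _ => List.prefix_iff_eq_take.symm

end Computability

section Extenders

variable {α : Type*} (g : α × ℕ → ℕ → Option (List Bool)) (Ps : List α)

/-- Reading `g (p, n) t` as the output of program `p` on input `n` if it halts within `t` steps:
the programs of `Ps` seen by stage `t` to output on `n` an extension of `w`. -/
def extenders (n t : ℕ) (w : List Bool) : List α :=
  Ps.filter fun p => (g (p, n) t).any fun y => decide (w <+: y)

variable {g Ps}

theorem mem_extenders {n t : ℕ} {w : List Bool} {p : α} :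
    p ∈ extenders g Ps n t w ↔ p ∈ Ps ∧ ∃ y, g (p, n) t = some y ∧ w <+: y := by
  simp [extenders, Option.any_eq_true]

theorem extenders_sublist_of_prefix {n t : ℕ} {u w : List Bool} (h : u <+: w) :
    (extenders g Ps n t w).Sublist (extenders g Ps n t u) :=
  Ps.monotone_filter_right fun p hp => by
    simp only [Option.any_eq_true, decide_eq_true_eq] at hp ⊢
    obtain ⟨y, hy, hwy⟩ := hp
    exact ⟨y, hy, h.trans hwy⟩

theorem extenders_sublist_of_le
    (hmono : ∀ a t t' y, t ≤ t' → g a t = some y → g a t' = some y) {n t t' : ℕ}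
    {w : List Bool} (h : t ≤ t') : (extenders g Ps n t w).Sublist (extenders g Ps n t' w) :=
  Ps.monotone_filter_right fun p hp => by
    simp only [Option.any_eq_true, decide_eq_true_eq] at hp ⊢
    obtain ⟨y, hy, hwy⟩ := hp
    exact ⟨y, hmono _ _ _ _ h hy, hwy⟩

theorem prefix_of_extenders_length_ge
    (hmono : ∀ a t t' y, t ≤ t' → g a t = some y → g a t' = some y) {n t t' m : ℕ}
    {σ w y : List Bool} {p : α} (hbound : ∀ t, (extenders g Ps n t σ).length ≤ m)
    (hσw : σ <+: w) (hm : m ≤ (extenders g Ps n t w).length) (hp : p ∈ Ps)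
    (hy : g (p, n) t' = some y) (hσy : σ <+: y) : w <+: y := by
  -- At a common later stage the `w`-extenders form a sublist of the `σ`-extenders that is
  -- at least as long, hence all of them.
  set T := max t t'
  have hsub : (extenders g Ps n T w).Sublist (extenders g Ps n T σ) :=
    extenders_sublist_of_prefix hσw
  have heq : extenders g Ps n T w = extenders g Ps n T σ :=
    hsub.eq_of_length_le <| (hbound T).trans <| hm.trans
      (extenders_sublist_of_le hmono (le_max_left t t')).length_le
  have hyT : g (p, n) T = some y := hmono _ _ _ _ (le_max_right t t') hy
  have hpσ : p ∈ extenders g Ps n T σ := mem_extenders.2 ⟨hp, y, hyT, hσy⟩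
  obtain ⟨-, y', hy', hwy'⟩ := mem_extenders.1 (heq ▸ hpσ)
  exact (Option.some_injective _ (hy'.symm.trans hyT)) ▸ hwy'

variable [Primcodable α]

theorem primrec_extenders (hg : Primrec₂ g) :
    Primrec fun x : ℕ × ℕ × List Bool => extenders g Ps x.1 x.2.1 x.2.2 :=
  Primrec.list_filter (Primrec.const Ps) <| Primrec₂.mk <| Primrec.option_any
    (hg.comp (Primrec.snd.pair (Primrec.fst.comp Primrec.fst))
      (Primrec.fst.comp (Primrec.snd.comp Primrec.fst)))
    (PrimrecRel.list_isPrefix.decide.comp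
      (Primrec.snd.comp (Primrec.snd.comp (Primrec.fst.comp Primrec.fst))) Primrec.snd).to₂

variable (g Ps) in
/-- When `σ` is a prefix of `f` and, for `n ≥ N`, at most `m` programs ever output on `n` an
extension of `σ`, `(n, t, w)` certifies `f i = w_i`. -/
def Certifies (σ : List Bool) (N m i : ℕ) (x : ℕ × ℕ × List Bool) : Prop :=
  N ≤ x.1 ∧ σ <+: x.2.2 ∧ i < x.2.2.length ∧ m ≤ (extenders g Ps x.1 x.2.1 x.2.2).length

theorem primrecRel_certifies (hg : Primrec₂ g) (σ : List Bool) (N m : ℕ) :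
    PrimrecRel (Certifies g Ps σ N m) := by
  have hw : Primrec fun x : ℕ × ℕ × ℕ × List Bool => x.2.2.2 :=
    Primrec.snd.comp (Primrec.snd.comp Primrec.snd)
  exact (Primrec.nat_le.comp (Primrec.const N) (Primrec.fst.comp Primrec.snd)).and <|
    (PrimrecRel.list_isPrefix.comp (Primrec.const σ) hw).and <|
    (Primrec.nat_lt.comp Primrec.fst (Primrec.list_length.comp hw)).and <|
    Primrec.nat_le.comp (Primrec.const m)
      (Primrec.list_length.comp ((primrec_extenders (Ps := Ps) hg).comp Primrec.snd))

theorem computable_of_stage_prefixes (hg : Primrec₂ g)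
    (hmono : ∀ a t t' y, t ≤ t' → g a t = some y → g a t' = some y) {f : ℕ → Bool}
    (hf : ∀ n, ∃ p ∈ Ps, ∃ t, g (p, n) t = some ((List.range n).map f)) : Computable f := by
  set B : Set ℕ :=
    {v | ∃ k N, ∀ n ≥ N, ∀ t, (extenders g Ps n t ((List.range k).map f)).length ≤ v}
  obtain ⟨k₀, N, hN⟩ : sInf B ∈ B :=
    Nat.sInf_mem ⟨Ps.length, 0, 0, fun n _ t => List.length_filter_le _ _⟩
  have hoften (k N' : ℕ) :
      ∃ n ≥ N', ∃ t, sInf B ≤ (extenders g Ps n t ((List.range k).map f)).length := by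
    by_contra! h
    have hle := Nat.sInf_le (show sInf B - 1 ∈ B from
      ⟨k, N', fun n hn t => Nat.le_sub_one_of_lt (h n hn t)⟩)
    have hpos := h N' le_rfl 0
    omega
  refine Computable.of_primrecRel_witness
    (primrecRel_certifies (Ps := Ps) hg ((List.range k₀).map f) (max N k₀) (sInf B))
    (F := fun i x => x.2.2.getD i false)
    ((Primrec.list_getD false).comp (Primrec.snd.comp (Primrec.snd.comp Primrec.snd))
      Primrec.fst).to₂ (fun i => ?_) ?_
  · obtain ⟨n, hn, t, hm⟩ := hoften (k₀ + i + 1) (max N k₀)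
    exact ⟨(n, t, (List.range (k₀ + i + 1)).map f), hn, List.map_range_prefix f (by omega),
      by simp, hm⟩
  · rintro i ⟨n, t, w⟩ ⟨hn, hσw, hi, hm⟩
    obtain ⟨p, hp, t', hpt⟩ := hf n
    exact List.getD_of_prefix_map_range false
      (prefix_of_extenders_length_ge hmono (hN n (le_of_max_le_left hn)) hσw hm hp hpt
        (List.map_range_prefix f (le_of_max_le_right hn))) hi

end Extenders

theorem computable_of_prefixes_mem_outputs {α : Type*} [Primcodable α]
    {φ : α → ℕ →. List Bool} (hφ : Partrec₂ φ) (Ps : List α) {f : ℕ → Bool}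
    (hf : ∀ n, ∃ p ∈ Ps, (List.range n).map f ∈ φ p n) :
    Computable f := by
  obtain ⟨g, hg, hspec, hmono⟩ := Partrec.exists_primrec_stages hφ
  exact computable_of_stage_prefixes hg hmono fun n =>
    (hf n).imp fun p ⟨hp, hx⟩ => ⟨hp, (hspec (p, n) _).1 hx⟩

theorem kolC_le_of_mem {φ : List Bool → List Bool → Part (List Bool)} {x y p : List Bool}
    (h : x ∈ φ p y) : kolC φ x y ≤ p.length :=
  Nat.sInf_le ⟨p, rfl, h⟩

theorem lamPrefix_eq_map_range {L : Language Bool} {χ : List Bool → Bool}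
    (hχ : ∀ s, χ s = true ↔ s ∈ L) (n : ℕ) :
    lamPrefix L n = (List.range n).map (χ ∘ natToStr) := by
  refine List.map_congr_left fun i _ => ?_
  by_cases h : natToStr i ∈ L
  · simp [h, (hχ _).2 h]
  · simp [h, mt (hχ _).1 h]

namespace IsUniversal

variable {φ : List Bool → List Bool → Part (List Bool)}

theorem exists_length_le_of_kolC_le (hφ : IsUniversal φ) {x y : List Bool} {c : ℕ}
    (h : kolC φ x y ≤ c) : ∃ p : List Bool, p.length ≤ c ∧ x ∈ φ p y := by
  obtain ⟨_, hsim⟩ := hφ.2 (fun _ _ => Part.some x) (Computable.const x).partrec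
  obtain ⟨q, hq, -⟩ := hsim [] y x (Part.mem_some x)
  obtain ⟨p, hp, hx⟩ := Nat.sInf_mem (⟨q.length, q, rfl, hq⟩ :
    {n | ∃ p : List Bool, p.length = n ∧ x ∈ φ p y}.Nonempty)
  exact ⟨p, hp ▸ h, hx⟩

theorem exists_kolC_lamPrefix_le (hφ : IsUniversal φ) {L : Language Bool}
    (hL : ComputablePred (· ∈ L)) : ∃ c : ℕ, ∀ n, kolC φ (lamPrefix L n) (natToStr n) ≤ c := by
  obtain ⟨χ, hχ, hχL⟩ := ComputablePred.computable_iff.1 hL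
  have hlam := lamPrefix_eq_map_range (L := L) (χ := χ) fun s => iff_of_eq (congrFun hχL s).symm
  have hψ : Partrec₂ fun (_ y : List Bool) => Part.some (lamPrefix L (strToNat y)) :=
    (((Computable.list_map_range (hχ.comp primrec_natToStr.to_comp)).comp
      (primrec_strToNat.to_comp.comp Computable.snd)).of_eq fun _ => (hlam _).symm).partrec
  obtain ⟨c, hc⟩ := hφ.2 _ hψ
  refine ⟨c, fun n => ?_⟩
  obtain ⟨q, hq, hql⟩ := hc [] (natToStr n) _ (by rw [strToNat_natToStr]; exact Part.mem_some _)
  exact (kolC_le_of_mem hq).trans (by simpa using hql)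

theorem computablePred_of_kolC_lamPrefix_le (hφ : IsUniversal φ) {L : Language Bool} {c : ℕ}
    (hc : ∀ n, kolC φ (lamPrefix L n) (natToStr n) ≤ c) : ComputablePred (· ∈ L) := by
  classical
  have hlam := lamPrefix_eq_map_range (L := L) (χ := fun s => decide (s ∈ L)) fun s => by simp
  have hf : Computable fun i => decide (natToStr i ∈ L) :=
    computable_of_prefixes_mem_outputs (φ := fun p n => φ p (natToStr n))
      (hφ.1.comp Computable.fst (primrec_natToStr.to_comp.comp Computable.snd))
      (List.finite_length_le Bool c).toFinset.toList fun n => by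
        obtain ⟨p, hp, hx⟩ := hφ.exists_length_le_of_kolC_le (hc n)
        exact ⟨p, by simpa using hp, hlam n ▸ hx⟩
  refine ComputablePred.computable_iff.2 ⟨_, hf.comp primrec_strToNat.to_comp, ?_⟩
  funext s
  simp [natToStr_strToNat]

end IsUniversal

/-- Recursive KC Characterization: `L` is recursive (decidable) iff there is a constant `c`
with `C(λ_{1:n} | n) ≤ c` for all `n`. -/
theorem kc_characterization_recursive (φ : List Bool → List Bool → Part (List Bool))
    (hφ : IsUniversal φ) (L : Language Bool) :
    ComputablePred (· ∈ L) ↔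
      ∃ c : ℕ, ∀ n : ℕ, kolC φ (lamPrefix L n) (natToStr n) ≤ c :=
  ⟨hφ.exists_kolC_lamPrefix_le, fun ⟨_, hc⟩ => hφ.computablePred_of_kolC_lamPrefix_le hc⟩
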